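/- arXiv:1111.5965 — 6 statements merged into one kernel-verified Lean document; each statement's English description precedes it below -/
import Mathlib

section
/- Let n = v ⊕ z be an H-type algebra: v carries an inner product and there is a linear map z → End(v), z ↦ J_z, with J_w J_z + J_z J_w = -2⟨z,w⟩·Id for all z,w ∈ z, and ⟨z,[u,v]⟩ = ⟨J_z u, v⟩. Then for every unit vector z ∈ z, the pair (J_z, -r_z) is a graded automorphism of n, where r_z is the orthogonal reflection of z through the hyperplane orthogonal to z; that is, [J_z u, J_z v] = -r_z([u,v]) for all u,v ∈ v. -/
open RealInnerProductSpace

/-- For an H-type algebra (Clifford relations `J_w J_z + J_z J_w = -2⟪z,w⟫ Id`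
and compatibility `⟪z,[u,v]⟫ = ⟪J_z u, v⟫`), every unit `z` gives a graded automorphism
`(J_z, -r_z)`: that is, `[J_z u, J_z v] = -r_z([u,v]) = -[u,v] + 2⟪z,[u,v]⟫ z`. -/
theorem stmt8
    (V Z : Type*) [NormedAddCommGroup V] [InnerProductSpace ℝ V]
    [NormedAddCommGroup Z] [InnerProductSpace ℝ Z]
    [FiniteDimensional ℝ V] [FiniteDimensional ℝ Z]
    (B : V →ₗ[ℝ] V →ₗ[ℝ] Z) (hanti : ∀ u v : V, B u v = - B v u)
    (J : Z →ₗ[ℝ] (V →ₗ[ℝ] V))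
    (hCliff : ∀ z w : Z, (J w) ∘ₗ (J z) + (J z) ∘ₗ (J w)
      = (-2 * ⟪z, w⟫) • (LinearMap.id : V →ₗ[ℝ] V))
    (hcompat : ∀ (z : Z) (u v : V), ⟪z, B u v⟫ = ⟪J z u, v⟫) :
    ∀ z : Z, ‖z‖ = 1 → ∀ u v : V,
      B (J z u) (J z v) = - B u v + (2 * ⟪z, B u v⟫) • z := by
  intro z hz u v
  have hzz : ⟪z, z⟫ = 1 := by
    rw [real_inner_self_eq_norm_sq, hz]; norm_num
  -- skew-symmetry of each J w
  have hskew : ∀ (w : Z) (a b : V), ⟪J w a, b⟫ = -⟪J w b, a⟫ := by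
    intro w a b
    rw [← hcompat, ← hcompat, hanti a b, inner_neg_right]
  -- J z squared is -1
  have hJsq : ∀ x : V, J z (J z x) = -x := by
    intro x
    have h := LinearMap.congr_fun (hCliff z z) x
    simp only [LinearMap.add_apply, LinearMap.coe_comp, Function.comp_apply,
      LinearMap.smul_apply, LinearMap.id_apply, hzz] at h
    have h2 : (2:ℝ) • J z (J z x) = (2:ℝ) • (-x : V) := by
      rw [two_smul]
      rw [h]
      norm_num [two_smul]
    exact smul_right_injective V (by norm_num) h2
  -- J z is an isometry on inner products
  have hiso : ∀ a b : V, ⟪J z a, J z b⟫ = ⟪a, b⟫ := by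
    intro a b
    rw [hskew, hJsq, inner_neg_left, neg_neg, real_inner_comm]
  apply ext_inner_left ℝ
  intro w
  have hc := LinearMap.congr_fun (hCliff z w) u
  simp only [LinearMap.add_apply, LinearMap.coe_comp, Function.comp_apply,
    LinearMap.smul_apply, LinearMap.id_apply] at hc
  have hJw : J w (J z u) = (-2 * ⟪z, w⟫) • u - J z (J w u) := by
    rw [← hc]; abel
  have key : ⟪w, B (J z u) (J z v)⟫
      = -2 * ⟪z, w⟫ * ⟪u, J z v⟫ - ⟪J w u, v⟫ := by
    rw [hcompat, hJw, inner_sub_left, inner_smul_left, hiso]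
    simp [real_inner_comm]
  have h1 : ⟪u, J z v⟫ = -⟪z, B u v⟫ := by
    rw [real_inner_comm, hskew, hcompat]
  rw [key, h1, inner_add_right, inner_neg_right, inner_smul_right,
    ← hcompat, real_inner_comm z w]
  ring
end

section
/- Suppose n = v ⊕ z is 2-step graded with a linear map z ↦ J_z ∈ End(v) satisfying J_z² = -‖z‖² Id and [J_z u, J_z v] = r_z([u,v]) for all unit z, where r_z is the reflection fixing the line ℝz and acting as -1 on z^⊥. Then with T defined via an invariant metric, T_z J_z = J_z T_z for all unit z, and T_z J_x = -J_x T_z whenever x ⊥ z are unit vectors. Consequently T_z² commutes with J_z and with every J_w for w ⊥ z. -/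
open RealInnerProductSpace

/-- If `J_z² = -‖z‖² Id` and `[J_z u, J_z v] = r_z([u,v])` for unit `z`
(`r_z` the reflection fixing `ℝz`, `r_z w = 2⟪z,w⟫ z - w`), with the metric on `v`
invariant under the `J_z`, then `T_z J_z = J_z T_z`, `T_z J_x = -J_x T_z` for unit
`x ⊥ z`, and consequently `T_z²` commutes with `J_z` and with every `J_w`, `w ⊥ z`. -/
theorem stmt10
    (V Z : Type*) [NormedAddCommGroup V] [InnerProductSpace ℝ V]
    [NormedAddCommGroup Z] [InnerProductSpace ℝ Z]
    [FiniteDimensional ℝ V] [FiniteDimensional ℝ Z]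
    (B : V →ₗ[ℝ] V →ₗ[ℝ] Z) (hanti : ∀ u v : V, B u v = - B v u)
    (J : Z →ₗ[ℝ] (V →ₗ[ℝ] V))
    (hJ2 : ∀ z : Z, (J z) ∘ₗ (J z) = (-(‖z‖ ^ 2)) • (LinearMap.id : V →ₗ[ℝ] V))
    (hbr : ∀ z : Z, ‖z‖ = 1 → ∀ u v : V,
      B (J z u) (J z v) = (2 * ⟪z, B u v⟫) • z - B u v)
    (hinv : ∀ z : Z, ‖z‖ = 1 → ∀ u v : V, ⟪J z u, J z v⟫ = ⟪u, v⟫)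
    (T : Z →ₗ[ℝ] (V →ₗ[ℝ] V))
    (hT : ∀ (z : Z) (u v : V), ⟪T z u, v⟫ = ⟪z, B u v⟫) :
    ∀ z : Z, ‖z‖ = 1 →
      ((T z) ∘ₗ (J z) = (J z) ∘ₗ (T z)) ∧
      (∀ x : Z, ‖x‖ = 1 → ⟪x, z⟫ = 0 → (T z) ∘ₗ (J x) = - ((J x) ∘ₗ (T z))) ∧
      (Commute ((T z) ∘ₗ (T z)) (J z)) ∧
      (∀ w : Z, ⟪w, z⟫ = 0 → Commute ((T z) ∘ₗ (T z)) (J w)) := by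
  intro z hz
  have hzz : ⟪z, z⟫ = (1 : ℝ) := by
    rw [real_inner_self_eq_norm_sq, hz]; norm_num
  -- J x ∘ J x = -id for unit x
  have hJJ : ∀ x : Z, ‖x‖ = 1 → ∀ v : V, J x (J x v) = -v := by
    intro x hx v
    have h := LinearMap.congr_fun (hJ2 x) v
    simp only [LinearMap.comp_apply, LinearMap.smul_apply, LinearMap.id_apply, hx] at h
    simpa using h
  -- key inner-product computation
  have key : ∀ x : Z, ‖x‖ = 1 → ∀ u v : V,
      ⟪T z (J x u), J x v⟫ = 2 * ⟪x, B u v⟫ * ⟪z, x⟫ - ⟪z, B u v⟫ := by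
    intro x hx u v
    rw [hT, hbr x hx u v, inner_sub_right, real_inner_smul_right]
    try ring
  -- commuting relation
  have comm1 : (T z) ∘ₗ (J z) = (J z) ∘ₗ (T z) := by
    ext u
    apply ext_inner_right ℝ
    intro v'
    have hv : J z (-(J z v')) = v' := by rw [map_neg, hJJ z hz]; simp
    calc ⟪((T z) ∘ₗ (J z)) u, v'⟫
        = ⟪T z (J z u), J z (-(J z v'))⟫ := by rw [hv]; rfl
      _ = 2 * ⟪z, B u (-(J z v'))⟫ * ⟪z, z⟫ - ⟪z, B u (-(J z v'))⟫ :=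
          key z hz u _
      _ = ⟪T z u, -(J z v')⟫ := by rw [hzz, hT]; ring
      _ = ⟪J z (T z u), J z (-(J z v'))⟫ := (hinv z hz _ _).symm
      _ = ⟪((J z) ∘ₗ (T z)) u, v'⟫ := by rw [hv]; rfl
  -- anticommuting relation
  have anti : ∀ x : Z, ‖x‖ = 1 → ⟪x, z⟫ = 0 →
      (T z) ∘ₗ (J x) = - ((J x) ∘ₗ (T z)) := by
    intro x hx hxz
    have hzx : ⟪z, x⟫ = 0 := by rwa [real_inner_comm]
    ext u
    apply ext_inner_right ℝ
    intro v'
    have hv : J x (-(J x v')) = v' := by rw [map_neg, hJJ x hx]; simp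
    calc ⟪((T z) ∘ₗ (J x)) u, v'⟫
        = ⟪T z (J x u), J x (-(J x v'))⟫ := by rw [hv]; rfl
      _ = 2 * ⟪x, B u (-(J x v'))⟫ * ⟪z, x⟫ - ⟪z, B u (-(J x v'))⟫ :=
          key x hx u _
      _ = - ⟪T z u, -(J x v')⟫ := by rw [hzx, hT]; ring
      _ = - ⟪J x (T z u), J x (-(J x v'))⟫ := by rw [hinv x hx]
      _ = ⟪(- ((J x) ∘ₗ (T z))) u, v'⟫ := by
          rw [hv]
          simp [inner_neg_left]
  refine ⟨comm1, anti, ?_, ?_⟩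
  · -- T z ² commutes with J z
    show ((T z) ∘ₗ (T z)) * (J z) = (J z) * ((T z) ∘ₗ (T z))
    have h : (T z) * (J z) = (J z) * (T z) := comm1
    calc ((T z) * (T z)) * (J z) = (T z) * ((T z) * (J z)) := by rw [mul_assoc]
      _ = (T z) * ((J z) * (T z)) := by rw [h]
      _ = ((T z) * (J z)) * (T z) := by rw [mul_assoc]
      _ = ((J z) * (T z)) * (T z) := by rw [h]
      _ = (J z) * ((T z) * (T z)) := by rw [mul_assoc]
  · intro w hwz
    rcases eq_or_ne w 0 with rfl | hw
    · simp [Commute, SemiconjBy]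
    · have hxnorm : ‖(‖w‖⁻¹ • w)‖ = 1 := by
        rw [norm_smul]
        simp [norm_norm, inv_mul_cancel₀ (norm_ne_zero_iff.mpr hw)]
      have hxz : ⟪(‖w‖⁻¹ • w), z⟫ = 0 := by
        rw [real_inner_smul_left, hwz, mul_zero]
      have h := anti _ hxnorm hxz
      have hJw : J w = ‖w‖ • J (‖w‖⁻¹ • w) := by
        rw [map_smul, smul_smul, mul_inv_cancel₀ (norm_ne_zero_iff.mpr hw), one_smul]
      show ((T z) ∘ₗ (T z)) * (J w) = (J w) * ((T z) ∘ₗ (T z))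
      set x := ‖w‖⁻¹ • w
      have h' : (T z) * (J x) = - ((J x) * (T z)) := h
      have hc : ((T z) * (T z)) * (J x) = (J x) * ((T z) * (T z)) := by
        calc ((T z) * (T z)) * (J x) = (T z) * ((T z) * (J x)) := by rw [mul_assoc]
          _ = (T z) * (- ((J x) * (T z))) := by rw [h']
          _ = - (((T z) * (J x)) * (T z)) := by rw [mul_neg, mul_assoc]
          _ = - ((- ((J x) * (T z))) * (T z)) := by rw [h']
          _ = (J x) * ((T z) * (T z)) := by rw [neg_mul, neg_neg, mul_assoc]
      rw [hJw]
      show ((T z) * (T z)) * (‖w‖ • J x) = (‖w‖ • J x) * ((T z) * (T z))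
      rw [mul_smul_comm, smul_mul_assoc, hc]
end

section
/- Let φ and ψ be the 2-forms on ℝ^{4s} with matrices [φ] = [[0, -I_{2s}],[I_{2s}, 0]] and [ψ] = [[0, A],[-Aᵀ, 0]] for a 2s × 2s real matrix A, and define the ℝ²-valued bracket [u,v] = (φ(u,v), ψ(u,v)). Then the resulting 2-step algebra n = ℝ^{4s} ⊕ ℝ² is fat if and only if for all (x,y) ∈ ℝ² \ {0}, the matrix x·[φ] + y·[ψ] is invertible, which holds if and only if xI + yA and xI - yAᵀ are invertible for all (x,y) ≠ 0, i.e., A has no real eigenvalues. -/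
/-!
The matrix `x[φ] + y[ψ]` is block antidiagonal with blocks `-(xI - yA)` and `xI - yAᵀ`, so it
is invertible iff both blocks are. A pencil `xI + yB` is invertible for every `(x, y) ≠ 0` iff
`B` has no real eigenvalue: for `y ≠ 0` it is `-y (μI - B)` with `μ = -x/y`. Finally `A`, `-A`
and `-Aᵀ` have real spectra that are empty simultaneously, since `σ(-B) = -σ(B)` and
`σ(Bᵀ) = σ(B)`.
-/

open Matrix

theorem forall_isUnit_smul_one_add_smul_iff {𝕜 R : Type*} [Field 𝕜] [Ring R] [Algebra 𝕜 R]
    (a : R) :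
    (∀ x y : 𝕜, (x, y) ≠ (0, 0) → IsUnit (x • (1 : R) + y • a)) ↔ spectrum 𝕜 a = ∅ := by
  refine ⟨fun h => Set.eq_empty_of_forall_notMem fun μ hμ => hμ ?_, fun h x y hxy => ?_⟩
  · simpa [spectrum.mem_resolventSet_iff, Algebra.algebraMap_eq_smul_one, sub_eq_add_neg]
      using h μ (-1) (by simp)
  · rcases eq_or_ne y 0 with rfl | hy
    · have hx : x ≠ 0 := by simpa using hxy
      simpa [Algebra.algebraMap_eq_smul_one] using
        (isUnit_iff_ne_zero.2 hx).map (algebraMap 𝕜 R)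
    · have hμ : -x / y ∉ spectrum 𝕜 a := h ▸ Set.notMem_empty _
      have hfactor : x • (1 : R) + y • a = (-y) • (algebraMap 𝕜 R (-x / y) - a) := by
        rw [Algebra.algebraMap_eq_smul_one, smul_sub, smul_smul]
        field_simp
        module
      rw [hfactor]
      exact (spectrum.notMem_iff.1 hμ).smul (Units.mk0 (-y) (neg_ne_zero.2 hy))

namespace Matrix

variable {n 𝕜 : Type*} [Fintype n] [DecidableEq n] [CommRing 𝕜]

theorem spectrum_transpose (A : Matrix n n 𝕜) : spectrum 𝕜 Aᵀ = spectrum 𝕜 A := by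
  ext μ
  rw [spectrum.mem_iff, spectrum.mem_iff, ← isUnit_transpose, transpose_sub,
    transpose_transpose, algebraMap_eq_diagonal, diagonal_transpose]

theorem isUnit_fromBlocks_zero₁₁_zero₂₂ (B C : Matrix n n 𝕜) :
    IsUnit (fromBlocks 0 B C 0) ↔ IsUnit B ∧ IsUnit C := by
  rw [← isUnit_submatrix_equiv (Equiv.sumComm n n) (Equiv.refl _)]
  simp [and_comm]

end Matrix

/-- With `[φ] = [[0,-I],[I,0]]` and `[ψ] = [[0,A],[-Aᵀ,0]]` on `ℝ^{4s}`, the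
2-step algebra with bracket `(φ(u,v), ψ(u,v))` is fat iff `x[φ] + y[ψ]` is invertible for
all `(x,y) ≠ 0`, iff `xI + yA` and `xI - yAᵀ` are invertible for all `(x,y) ≠ 0`, iff `A`
has no real eigenvalues. -/
theorem stmt12 (s : ℕ) (A : Matrix (Fin (2 * s)) (Fin (2 * s)) ℝ)
    (Φ Ψ : Matrix (Fin (2 * s) ⊕ Fin (2 * s)) (Fin (2 * s) ⊕ Fin (2 * s)) ℝ)
    (hΦ : Φ = Matrix.fromBlocks 0 (-1) 1 0)
    (hΨ : Ψ = Matrix.fromBlocks 0 A (-Aᵀ) 0) :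
    ((∀ x y : ℝ, (x, y) ≠ (0, 0) → IsUnit (x • Φ + y • Ψ)) ↔
      (∀ x y : ℝ, (x, y) ≠ (0, 0) →
        IsUnit (x • (1 : Matrix (Fin (2 * s)) (Fin (2 * s)) ℝ) + y • A) ∧
        IsUnit (x • (1 : Matrix (Fin (2 * s)) (Fin (2 * s)) ℝ) - y • Aᵀ))) ∧
    ((∀ x y : ℝ, (x, y) ≠ (0, 0) →
        IsUnit (x • (1 : Matrix (Fin (2 * s)) (Fin (2 * s)) ℝ) + y • A) ∧
        IsUnit (x • (1 : Matrix (Fin (2 * s)) (Fin (2 * s)) ℝ) - y • Aᵀ)) ↔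
      spectrum ℝ A = ∅) := by
  subst hΦ hΨ
  have hblocks (x y : ℝ) : x • fromBlocks 0 (-1) 1 0 + y • fromBlocks 0 A (-Aᵀ) 0 =
      fromBlocks 0 (-(x • 1 + y • -A)) (x • 1 + y • -Aᵀ) 0 := by
    rw [fromBlocks_smul, fromBlocks_smul, fromBlocks_add, fromBlocks_inj]
    refine ⟨?_, ?_, ?_, ?_⟩ <;> module
  have hsub_eq_add_neg (x y : ℝ) : x • (1 : Matrix (Fin (2 * s)) (Fin (2 * s)) ℝ) - y • Aᵀ =
      x • 1 + y • -Aᵀ := by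
    module
  simp only [hblocks, isUnit_fromBlocks_zero₁₁_zero₂₂, IsUnit.neg_iff, hsub_eq_add_neg, imp_and,
    forall_and, forall_isUnit_smul_one_add_smul_iff, ← spectrum.neg_eq, spectrum_transpose,
    Set.neg_eq_empty, and_self]
end

section
/- Let N be the r × r nilpotent lower shift matrix (entries n_{j+1,j} = 1, else 0) and let C be a symmetric r × r matrix (over a commutative ring). Then NC = (NC)ᵀ if and only if the entries of C vanish on all strict upper antidiagonals (c_{i,j} = 0 whenever i + j ≤ r) and are constant on each lower antidiagonal (c_{i,j} = c_{i',j'} whenever i + j = i' + j' > r). -/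
open Matrix

/-- For the `r × r` lower shift matrix `N` and a symmetric matrix `C`,
`NC` is symmetric iff `C` vanishes on the strict upper antidiagonals and is constant
on each lower antidiagonal.  (Indices here are 0-based, so the 1-based condition
`i + j ≤ r` reads `i + j + 2 ≤ r`.) -/
theorem stmt16 (R : Type*) [CommRing R] (r : ℕ)
    (N C : Matrix (Fin r) (Fin r) R)
    (hN : ∀ i j : Fin r, N i j = if (i : ℕ) = (j : ℕ) + 1 then 1 else 0)
    (hC : Cᵀ = C) :
    N * C = (N * C)ᵀ ↔
      ((∀ i j : Fin r, (i : ℕ) + (j : ℕ) + 2 ≤ r → C i j = 0) ∧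
       (∀ i j i' j' : Fin r, (i : ℕ) + (j : ℕ) = (i' : ℕ) + (j' : ℕ) →
          r < (i : ℕ) + (j : ℕ) + 2 → C i j = C i' j')) := by
  have hsym : ∀ i j : Fin r, C i j = C j i := by
    intro i j
    conv_lhs => rw [← hC]
    rfl
  have hmul : ∀ (i j : Fin r), (N * C) i j
      = ∑ k : Fin r, (if (i : ℕ) = (k : ℕ) + 1 then 1 else 0) * C k j := by
    intro i j; rw [Matrix.mul_apply]; simp_rw [hN]
  have hzero : ∀ (h0 : 0 < r) (j : Fin r), (N * C) ⟨0, h0⟩ j = 0 := by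
    intro h0 j; rw [hmul]
    apply Finset.sum_eq_zero; intro k _; simp
  have hsucc : ∀ (a : ℕ) (ha : a + 1 < r) (j : Fin r),
      (N * C) ⟨a + 1, ha⟩ j = C ⟨a, by omega⟩ j := by
    intro a ha j; rw [hmul]
    rw [Finset.sum_eq_single (⟨a, by omega⟩ : Fin r)]
    · simp
    · intro k _ hk
      rw [if_neg, zero_mul]
      intro h; apply hk; exact Fin.ext (by simpa using h.symm)
    · intro h; exact absurd (Finset.mem_univ _) h
  constructor
  · intro h
    have hent : ∀ i j : Fin r, (N * C) i j = (N * C) j i := by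
      intro i j
      conv_lhs => rw [h]
      rfl
    -- step lemma : C (a, b+1) = C (a+1, b)
    have step : ∀ (a b : ℕ) (ha : a + 1 < r) (hb : b + 1 < r),
        C ⟨a, by omega⟩ ⟨b + 1, hb⟩ = C ⟨a + 1, ha⟩ ⟨b, by omega⟩ := by
      intro a b ha hb
      have h1 := hent ⟨a + 1, ha⟩ ⟨b + 1, hb⟩
      rw [hsucc a ha, hsucc b hb] at h1
      rw [h1, hsym]
    -- vanishing
    have hvan : ∀ (b a : ℕ) (ha : a < r) (hb : b < r), a + b + 2 ≤ r →
        C ⟨a, ha⟩ ⟨b, hb⟩ = 0 := by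
      intro b
      induction b with
      | zero =>
        intro a ha hb hle
        have h1 := hent ⟨a + 1, by omega⟩ ⟨0, hb⟩
        rw [hsucc a (by omega), hzero hb] at h1
        convert h1 using 3
      | succ b ih =>
        intro a ha hb hle
        rw [step a b (by omega) hb]
        exact ih (a + 1) (by omega) (by omega) (by omega)
    -- constancy along antidiagonal
    have hshift : ∀ (k a b : ℕ) (ha : a + k < r) (hb : b + k < r),
        C ⟨a + k, ha⟩ ⟨b, by omega⟩ = C ⟨a, by omega⟩ ⟨b + k, hb⟩ := by
      intro k
      induction k with
      | zero => intro a b ha hb; rfl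
      | succ k ih =>
        intro a b ha hb
        have e1 : C ⟨a + (k + 1), ha⟩ ⟨b, by omega⟩
            = C ⟨a + k, by omega⟩ ⟨b + 1, by omega⟩ := by
          rw [step (a + k) b (by omega) (by omega)]
          congr 1
        rw [e1, ih a (b + 1) (by omega) (by omega)]
        congr 1
        exact Fin.ext (by first | omega | (simp <;> omega))
    refine ⟨fun i j hij => ?_, fun i j i' j' hsum _ => ?_⟩
    · have := hvan j i i.isLt j.isLt hij
      convert this using 2 <;> exact Fin.ext rfl
    · rcases le_total (i' : ℕ) (i : ℕ) with hle | hle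
      · obtain ⟨k, hk⟩ := Nat.le.dest hle
        have hj' : (j' : ℕ) = (j : ℕ) + k := by omega
        have := hshift k i' j (by omega) (by omega)
        calc C i j = C ⟨(i' : ℕ) + k, by omega⟩ ⟨(j : ℕ), by omega⟩ := by
              congr 1 <;> exact Fin.ext (by first | omega | (simp <;> omega))
          _ = C ⟨(i' : ℕ), by omega⟩ ⟨(j : ℕ) + k, by omega⟩ := this
          _ = C i' j' := by congr 1 <;> exact Fin.ext (by first | omega | (simp <;> omega))
      · obtain ⟨k, hk⟩ := Nat.le.dest hle
        have hj : (j : ℕ) = (j' : ℕ) + k := by omega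
        have := hshift k i j' (by omega) (by omega)
        calc C i j = C ⟨(i : ℕ), by omega⟩ ⟨(j' : ℕ) + k, by omega⟩ := by
              congr 1 <;> exact Fin.ext (by first | omega | (simp <;> omega))
          _ = C ⟨(i : ℕ) + k, by omega⟩ ⟨(j' : ℕ), by omega⟩ := this.symm
          _ = C i' j' := by congr 1 <;> exact Fin.ext (by first | omega | (simp <;> omega))
  · rintro ⟨hv, hc⟩
    ext i j
    rw [Matrix.transpose_apply]
    rcases i with ⟨i, hi⟩
    rcases j with ⟨j, hj⟩
    match i, j with
    | 0, 0 => rfl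
    | 0, b + 1 =>
      rw [hzero hi, hsucc b hj]
      exact (hv ⟨b, by omega⟩ ⟨0, by omega⟩ (by simp; omega)).symm
    | a + 1, 0 =>
      rw [hzero hj, hsucc a hi]
      exact hv ⟨a, by omega⟩ ⟨0, by omega⟩ (by simp; omega)
    | a + 1, b + 1 =>
      rw [hsucc a hi, hsucc b hj]
      by_cases hcase : a + b + 3 ≤ r
      · rw [hv ⟨a, by omega⟩ ⟨b + 1, hj⟩ (by simp; omega),
          hv ⟨b, by omega⟩ ⟨a + 1, hi⟩ (by simp; omega)]
      · exact hc ⟨a, by omega⟩ ⟨b + 1, hj⟩ ⟨b, by omega⟩ ⟨a + 1, hi⟩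
          (by simp; omega) (by simp; omega)
end

section
/- For the fat algebra n_{(i,r)} with single Jordan block of size r at c = i, the Lie algebra g₀(n) = {X ∈ gl(4r,ℝ) : T₁X + Xᵀ T₁ = 0 and T₂X + Xᵀ T₂ = 0} (with T₁, T₂ the matrices of the two component 2-forms) has real dimension 6r. -/
open Matrix

/-- The 2×2 real matrix representing a complex number `c`. -/
def Zmat (c : ℂ) : Matrix (Fin 2) (Fin 2) ℝ := !![c.re, c.im; -c.im, c.re]

/-- The `2r × 2r` real block-Jordan matrix `A(c,r)`: blocks `Z(c)` on the diagonal and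
`I₂` on the (block) subdiagonal. -/
def Amat (c : ℂ) (r : ℕ) : Matrix (Fin r × Fin 2) (Fin r × Fin 2) ℝ :=
  fun p q =>
    if p.1 = q.1 then Zmat c p.2 q.2
    else if (p.1 : ℕ) = (q.1 : ℕ) + 1 then (1 : Matrix (Fin 2) (Fin 2) ℝ) p.2 q.2
    else 0

/-- `T₁ = [[0, I_{2r}],[-I_{2r}, 0]]` on `ℝ^{4r}`, the matrix of the first bracket
component. -/
def T1mat (r : ℕ) :
    Matrix ((Fin r × Fin 2) ⊕ (Fin r × Fin 2)) ((Fin r × Fin 2) ⊕ (Fin r × Fin 2)) ℝ :=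
  Matrix.fromBlocks 0 1 (-1) 0

/-- `T₂(A) = [[0, A],[-Aᵀ, 0]]`, the matrix of the second bracket component. -/
def T2mat {r : ℕ} (A : Matrix (Fin r × Fin 2) (Fin r × Fin 2) ℝ) :
    Matrix ((Fin r × Fin 2) ⊕ (Fin r × Fin 2)) ((Fin r × Fin 2) ⊕ (Fin r × Fin 2)) ℝ :=
  Matrix.fromBlocks 0 A (-Aᵀ) 0

/-!
Write `X ∈ g₀` in `n ⊕ n` blocks. The `T₁`-condition says `X = [[P, Q], [R, -Pᵀ]]` with `Q` and `R`
symmetric; the `T₂`-condition then says that `Pᵀ`, `S Q` and `R S` commute with `A = A(i,r)`, where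
`S = K ⊗ diag(1, -1)` (`K` the exchange matrix) is a symmetric involution for which every matrix
commuting with `A` is `S`-self-adjoint. So `g₀` is three copies of the centraliser of `A`.

Split `A = J + N` into the complex structure `J = 1 ⊗ Z(i)`, with `J² = -1`, and the nilpotent block
shift `N`. A matrix commuting with `A` commutes with `J` and `N` separately, and `e_(0,0)` is a
cyclic vector for the commutative algebra generated by `J` and `N`: the `2r` matrices `N^k (-J)^j`
send it to the standard basis. Hence they form a basis of the centraliser, and `dim g₀ = 3 · 2r`.
-/

open Kronecker

theorem Commute.of_commute_add_of_mul_self_eq_neg_one {K A : Type*} [Field K] [Ring A]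
    [Algebra K A] [NeZero (2 : K)] {J N M : A}
    (hJ : J * J = -1) (hJN : Commute J N) (hN : IsNilpotent N) (hM : Commute M (J + N)) :
    Commute M J := by
  -- `D = [J, M]` satisfies `D = ½ J [N, D]`, and `X ↦ ½ J [N, X]` is nilpotent.
  set D := J * M - M * J with hD
  have hfix : J * (N * D - D * N) = (2 : K) • D := by
    have h : J * (N * D - D * N) = D + D
        + ((J * J + 1) * (N * M - M * N + M * J) - J * M * (J * J + 1)
          + J * M * (J * N - N * J) - J * (J * N - N * J) * M
          + (M * (J + N) - (J + N) * M) + J * (M * (J + N) - (J + N) * M) * J) := by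
      rw [hD]; noncomm_ring
    -- the bracketed terms vanish by `J² = -1`, `[J, N] = 0` and `[M, J + N] = 0`
    rw [hJ, hJN.eq, hM.eq, neg_add_cancel, sub_self, sub_self] at h
    simpa only [zero_mul, mul_zero, sub_zero, add_zero, two_smul] using h
  set φ : Module.End K A :=
    LinearMap.mulLeft K ((2 : K)⁻¹ • J) * (LinearMap.mulLeft K N - LinearMap.mulRight K N)
  have hφ : IsNilpotent φ := by
    refine Commute.isNilpotent_mul_left ?_ ?_
    · exact ((hJN.smul_left _).map (Algebra.lmul K A)).sub_right
        (LinearMap.commute_mulLeft_right _ _)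
    · exact (LinearMap.commute_mulLeft_right N N).isNilpotent_sub
        ((LinearMap.isNilpotent_mulLeft_iff K N).2 hN)
        ((LinearMap.isNilpotent_mulRight_iff K N).2 hN)
  have hφD : φ D = D := by
    change (2 : K)⁻¹ • J * (N * D - D * N) = D
    rw [smul_mul_assoc, hfix, inv_smul_smul₀ two_ne_zero]
  obtain ⟨k, hk⟩ := hφ
  have h0 : D = 0 := by
    rw [← Function.iterate_fixed hφD k, ← Module.End.pow_apply, hk, LinearMap.zero_apply]
  exact (sub_eq_zero.1 h0).symm

theorem Algebra.commute_of_mem_adjoin_of_pairwise_commute {R A : Type*} [CommSemiring R]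
    [Semiring A] [Algebra R A] {s : Set A} (hcomm : ∀ a ∈ s, ∀ b ∈ s, Commute a b) {x y : A}
    (hx : x ∈ Algebra.adjoin R s) (hy : y ∈ Algebra.adjoin R s) : Commute x y :=
  Algebra.commute_of_mem_adjoin_of_forall_mem_commute hy fun b hb =>
    (Algebra.commute_of_mem_adjoin_of_forall_mem_commute hx fun a ha => hcomm b hb a ha).symm

theorem Subalgebra.mem_centralizer_singleton_iff {R A : Type*} [CommSemiring R] [Semiring A]
    [Algebra R A] {a z : A} : z ∈ Subalgebra.centralizer R {a} ↔ a * z = z * a := by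
  simp [Subalgebra.mem_centralizer_iff]

section CyclicVector

variable {α n : Type*} [CommRing α] [Fintype n] [DecidableEq n]
  {G : n → Matrix n n α} {v : n → α}

theorem Matrix.sum_smul_mulVec_of_mulVec_eq_single (hG : ∀ x, G x *ᵥ v = Pi.single x 1)
    (w : n → α) : (∑ x, w x • G x) *ᵥ v = w := by
  simp only [sum_mulVec, smul_mulVec, hG]
  exact (pi_eq_sum_univ' w).symm

theorem Matrix.linearIndependent_of_mulVec_eq_single (hG : ∀ x, G x *ᵥ v = Pi.single x 1) :
    LinearIndependent α G :=
  Fintype.linearIndependent_iff.2 fun w hw x => by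
    rw [← sum_smul_mulVec_of_mulVec_eq_single hG w, hw, zero_mulVec, Pi.zero_apply]

theorem Matrix.eq_zero_of_commute_of_mulVec_eq_zero (hG : ∀ x, G x *ᵥ v = Pi.single x 1)
    {M : Matrix n n α} (hM : ∀ x, Commute M (G x)) (hMv : M *ᵥ v = 0) : M = 0 :=
  ext_of_mulVec_single fun x => by
    rw [← hG x, mulVec_mulVec, (hM x).eq, ← mulVec_mulVec, hMv, mulVec_zero, zero_mulVec]

theorem Matrix.eq_sum_smul_of_commute (hG : ∀ x, G x *ᵥ v = Pi.single x 1)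
    (hGG : ∀ x y, Commute (G x) (G y)) {M : Matrix n n α} (hM : ∀ x, Commute M (G x)) :
    M = ∑ x, (M *ᵥ v) x • G x := by
  refine sub_eq_zero.1 (eq_zero_of_commute_of_mulVec_eq_zero hG (fun x => ?_) ?_)
  · exact (hM x).sub_left (Commute.sum_left _ _ _ fun y _ => (hGG y x).smul_left _)
  · rw [sub_mulVec, sum_smul_mulVec_of_mulVec_eq_single hG, sub_self]

end CyclicVector

theorem Matrix.IsSelfAdjoint.of_mem_adjoin {α n : Type*} [CommRing α] [Fintype n] [DecidableEq n]
    {S : Matrix n n α} {s : Set (Matrix n n α)}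
    (hcomm : ∀ a ∈ s, ∀ b ∈ s, Commute a b) (hs : ∀ a ∈ s, S.IsSelfAdjoint a)
    {L : Matrix n n α} (hL : L ∈ Algebra.adjoin α s) : S.IsSelfAdjoint L := by
  unfold Matrix.IsSelfAdjoint Matrix.IsAdjointPair at hs ⊢
  induction hL using Algebra.adjoin_induction with
  | mem x hx => exact hs x hx
  | algebraMap c => simp [Algebra.algebraMap_eq_smul_one]
  | add x y _ _ hx hy => rw [transpose_add, add_mul, mul_add, hx, hy]
  | mul x y hx' hy' hx hy =>
    rw [transpose_mul, mul_assoc, hx, ← mul_assoc, hy, mul_assoc,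
      (Algebra.commute_of_mem_adjoin_of_pairwise_commute hcomm hx' hy').eq]

section BlockStructure

variable {α n : Type*} [CommRing α] [Fintype n]

theorem Matrix.isSkewAdjoint_iff_mul_add_transpose_mul_eq_zero (T X : Matrix n n α) :
    T.IsSkewAdjoint X ↔ T * X + Xᵀ * T = 0 := by
  rw [Matrix.IsSkewAdjoint, Matrix.IsAdjointPair, mul_neg, add_eq_zero_iff_eq_neg']

theorem Matrix.isSkewAdjoint_fromBlocks_iff (A P Q R D : Matrix n n α) :
    (fromBlocks 0 A (-Aᵀ) 0).IsSkewAdjoint (fromBlocks P Q R D) ↔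
      Rᵀ * Aᵀ = A * R ∧ Pᵀ * A = -(A * D) ∧ -(Dᵀ * Aᵀ) = Aᵀ * P ∧ Qᵀ * A = Aᵀ * Q := by
  simp [Matrix.IsSkewAdjoint, Matrix.IsAdjointPair, fromBlocks_transpose, fromBlocks_multiply,
    fromBlocks_neg, fromBlocks_inj]

variable [DecidableEq n]

theorem Matrix.isSkewAdjoint_fromBlocks_one_iff (P Q R D : Matrix n n α) :
    (fromBlocks 0 1 (-1) 0).IsSkewAdjoint (fromBlocks P Q R D) ↔
      Rᵀ = R ∧ D = -Pᵀ ∧ Qᵀ = Q := by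
  have h := isSkewAdjoint_fromBlocks_iff (1 : Matrix n n α) P Q R D
  simp only [transpose_one, mul_one, one_mul] at h
  rw [h]
  constructor
  · rintro ⟨hR, hP, -, hQ⟩
    exact ⟨hR, by rw [hP, neg_neg], hQ⟩
  · rintro ⟨hR, rfl, hQ⟩
    simp [hR, hQ]

variable (A S : Matrix n n α)

def centralizerBlocks :
    (Subalgebra.centralizer α {A} × Subalgebra.centralizer α {A} × Subalgebra.centralizer α {A})
      →ₗ[α] Matrix (n ⊕ n) (n ⊕ n) α where
  toFun L := fromBlocks (L.1 : Matrix n n α)ᵀ (S * L.2.1) (L.2.2 * S) (-L.1)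
  map_add' L L' := by
    simp only [Prod.fst_add, Prod.snd_add, Subalgebra.coe_add, transpose_add, mul_add, add_mul,
      neg_add, fromBlocks_add]
  map_smul' c L := by
    simp only [Prod.smul_fst, Prod.smul_snd, Subalgebra.coe_smul, transpose_smul, Matrix.mul_smul,
      smul_mul, smul_neg, RingHom.id_apply, fromBlocks_smul]

variable {A S}

theorem Matrix.IsSelfAdjoint.mul_transpose_eq (hS : S * S = 1) {L : Matrix n n α}
    (h : S.IsSelfAdjoint L) : S * Lᵀ = L * S :=
  calc S * Lᵀ = S * (Lᵀ * S) * S := by rw [mul_assoc, mul_assoc, hS, mul_one]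
    _ = L * S := by rw [h, ← mul_assoc, hS, one_mul]

theorem centralizerBlocks_injective (hS : S * S = 1) :
    Function.Injective (centralizerBlocks A S) := by
  rw [← LinearMap.ker_eq_bot, LinearMap.ker_eq_bot']
  rintro ⟨L₀, L₁, L₂⟩ h
  simp only [centralizerBlocks, LinearMap.coe_mk, AddHom.coe_mk, ← fromBlocks_zero,
    fromBlocks_inj] at h
  obtain ⟨-, h₁, h₂, h₀⟩ := h
  have h₁' := congrArg (S * ·) h₁
  have h₂' := congrArg (· * S) h₂
  simp only [← mul_assoc, mul_assoc _ S S, hS, one_mul, mul_one, mul_zero, zero_mul] at h₁' h₂'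
  ext <;> simp_all

theorem centralizerBlocks_mem (hS : S * S = 1) (hSt : Sᵀ = S)
    (hC : ∀ L ∈ Subalgebra.centralizer α {A}, S.IsSelfAdjoint L)
    (L : Subalgebra.centralizer α {A} × Subalgebra.centralizer α {A} ×
      Subalgebra.centralizer α {A}) :
    centralizerBlocks A S L ∈ skewAdjointMatricesSubmodule (fromBlocks 0 1 (-1) 0) ⊓
      skewAdjointMatricesSubmodule (fromBlocks 0 A (-Aᵀ) 0) := by
  obtain ⟨⟨L₀, h₀⟩, ⟨L₁, h₁⟩, ⟨L₂, h₂⟩⟩ := L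
  have hA := hC A (Subalgebra.mem_centralizer_singleton_iff.2 rfl)
  have hQ : (S * L₁)ᵀ = S * L₁ := by rw [transpose_mul, hSt, hC L₁ h₁]
  have hR : (L₂ * S)ᵀ = L₂ * S := by rw [transpose_mul, hSt, (hC L₂ h₂).mul_transpose_eq hS]
  rw [Subalgebra.mem_centralizer_singleton_iff] at h₀ h₁ h₂
  rw [Submodule.mem_inf, mem_skewAdjointMatricesSubmodule, mem_skewAdjointMatricesSubmodule,
    centralizerBlocks, LinearMap.coe_mk, AddHom.coe_mk, isSkewAdjoint_fromBlocks_one_iff,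
    isSkewAdjoint_fromBlocks_iff]
  refine ⟨⟨hR, by rw [transpose_transpose], hQ⟩, ?_, ?_, ?_, ?_⟩
  · rw [hR, mul_assoc, hA.mul_transpose_eq hS, ← mul_assoc, ← h₂, mul_assoc]
  · rw [transpose_transpose, mul_neg, neg_neg, h₀]
  · rw [transpose_neg, neg_mul, neg_neg, ← transpose_mul, h₀, transpose_mul]
  · rw [hQ, mul_assoc, ← h₁, ← mul_assoc, ← mul_assoc, hA]

theorem mem_range_centralizerBlocks (hS : S * S = 1)
    (hC : ∀ L ∈ Subalgebra.centralizer α {A}, S.IsSelfAdjoint L) {X : Matrix (n ⊕ n) (n ⊕ n) α}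
    (hX : X ∈ skewAdjointMatricesSubmodule (fromBlocks 0 1 (-1) 0) ⊓
      skewAdjointMatricesSubmodule (fromBlocks 0 A (-Aᵀ) 0)) :
    X ∈ LinearMap.range (centralizerBlocks A S) := by
  have hA := hC A (Subalgebra.mem_centralizer_singleton_iff.2 rfl)
  obtain ⟨P, Q, R, D, rfl⟩ : ∃ P Q R D, X = fromBlocks P Q R D :=
    ⟨_, _, _, _, (fromBlocks_toBlocks X).symm⟩
  rw [Submodule.mem_inf, mem_skewAdjointMatricesSubmodule, mem_skewAdjointMatricesSubmodule,
    isSkewAdjoint_fromBlocks_one_iff, isSkewAdjoint_fromBlocks_iff] at hX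
  obtain ⟨⟨hR, rfl, hQ⟩, hRA, hPA, -, hQA⟩ := hX
  refine ⟨⟨⟨Pᵀ, ?_⟩, ⟨S * Q, ?_⟩, ⟨R * S, ?_⟩⟩, ?_⟩
  · rw [Subalgebra.mem_centralizer_singleton_iff, hPA, mul_neg, neg_neg]
  · rw [Subalgebra.mem_centralizer_singleton_iff, ← mul_assoc, ← hA.mul_transpose_eq hS,
      mul_assoc, ← hQA, hQ, mul_assoc]
  · rw [Subalgebra.mem_centralizer_singleton_iff, ← mul_assoc, ← hRA, hR, mul_assoc, mul_assoc,
      hA]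
  · simp only [centralizerBlocks, LinearMap.coe_mk, AddHom.coe_mk, transpose_transpose,
      ← mul_assoc, hS, one_mul, mul_assoc R, mul_one]

theorem range_centralizerBlocks (hS : S * S = 1) (hSt : Sᵀ = S)
    (hC : ∀ L ∈ Subalgebra.centralizer α {A}, S.IsSelfAdjoint L) :
    LinearMap.range (centralizerBlocks A S) =
      skewAdjointMatricesSubmodule (fromBlocks 0 1 (-1) 0) ⊓
        skewAdjointMatricesSubmodule (fromBlocks 0 A (-Aᵀ) 0) :=
  le_antisymm (by rintro _ ⟨L, rfl⟩; exact centralizerBlocks_mem hS hSt hC L)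
    fun _ hX => mem_range_centralizerBlocks hS hC hX

end BlockStructure

theorem Matrix.finrank_skewAdjoint_fromBlocks_inf {K n : Type*} [Field K] [Fintype n]
    [DecidableEq n] {A S : Matrix n n K} (hS : S * S = 1) (hSt : Sᵀ = S)
    (hC : ∀ L ∈ Subalgebra.centralizer K {A}, S.IsSelfAdjoint L) :
    Module.finrank K ↥(skewAdjointMatricesSubmodule (fromBlocks 0 1 (-1) 0) ⊓
        skewAdjointMatricesSubmodule (fromBlocks 0 A (-Aᵀ) 0)) =
      3 * Module.finrank K (Subalgebra.centralizer K {A}) := by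
  rw [← range_centralizerBlocks hS hSt hC,
    LinearMap.finrank_range_of_inj (centralizerBlocks_injective hS), Module.finrank_prod,
    Module.finrank_prod]
  ring

namespace FatAlgebra

variable (r : ℕ)

def complexStructure : Matrix (Fin r × Fin 2) (Fin r × Fin 2) ℝ := 1 ⊗ₖ Zmat Complex.I

def shiftMatrix : Matrix (Fin r) (Fin r) ℝ := Matrix.of fun p q => if (p : ℕ) = q + 1 then 1 else 0

def blockShift : Matrix (Fin r × Fin 2) (Fin r × Fin 2) ℝ := shiftMatrix r ⊗ₖ 1

def flipForm : Matrix (Fin r × Fin 2) (Fin r × Fin 2) ℝ :=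
  Fin.revPerm.permMatrix ℝ ⊗ₖ !![1, 0; 0, -1]

def cyclicFamily (x : Fin r × Fin 2) : Matrix (Fin r × Fin 2) (Fin r × Fin 2) ℝ :=
  blockShift r ^ (x.1 : ℕ) * (-complexStructure r) ^ (x.2 : ℕ)

theorem Amat_I_eq_add : Amat Complex.I r = complexStructure r + blockShift r := by
  ext ⟨p, i⟩ ⟨q, j⟩
  simp only [Amat, complexStructure, blockShift, shiftMatrix, Matrix.add_apply, kroneckerMap_apply,
    one_apply, of_apply]
  by_cases hpq : p = q
  · subst hpq; simp
  · simp only [hpq, if_false, Fin.ext_iff]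
    split_ifs <;> simp

theorem complexStructure_mul_self : complexStructure r * complexStructure r = -1 := by
  have h : Zmat Complex.I * Zmat Complex.I = (-1 : ℝ) • 1 := by
    ext i j; fin_cases i <;> fin_cases j <;> simp [Zmat, mul_apply, Fin.sum_univ_two]
  rw [complexStructure, ← mul_kronecker_mul, h, one_mul, kronecker_smul, one_kronecker_one,
    neg_one_smul]

theorem commute_complexStructure_blockShift : Commute (complexStructure r) (blockShift r) := by
  rw [Commute, SemiconjBy, complexStructure, blockShift, ← mul_kronecker_mul,
    ← mul_kronecker_mul, one_mul, mul_one, one_mul, mul_one]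

theorem blockShift_mulVec_single (p : Fin r) (i : Fin 2) :
    blockShift r *ᵥ Pi.single (p, i) 1 =
      if h : (p : ℕ) + 1 < r then Pi.single (⟨p + 1, h⟩, i) 1 else 0 := by
  ext ⟨a, b⟩
  simp only [mulVec_single_one, col_apply, blockShift, shiftMatrix, kroneckerMap_apply, of_apply,
    one_apply]
  split_ifs <;> simp_all [Pi.single_apply, Prod.ext_iff, Fin.ext_iff]
  omega

theorem blockShift_pow_mulVec_single (k : ℕ) (p : Fin r) (i : Fin 2) :
    blockShift r ^ k *ᵥ Pi.single (p, i) 1 =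
      if h : (p : ℕ) + k < r then Pi.single (⟨p + k, h⟩, i) 1 else 0 := by
  induction k generalizing p with
  | zero => simp only [pow_zero, one_mulVec, add_zero, dif_pos p.isLt]
  | succ k ih =>
    rw [pow_succ, ← mulVec_mulVec, blockShift_mulVec_single]
    by_cases h₁ : (p : ℕ) + 1 < r
    · rw [dif_pos h₁, ih]
      have e : (p : ℕ) + 1 + k = p + (k + 1) := by omega
      simp only [e]
    · rw [dif_neg h₁, mulVec_zero, dif_neg (by omega)]

theorem isNilpotent_blockShift : IsNilpotent (blockShift r) := by
  refine ⟨r, ext_of_mulVec_single fun ⟨p, i⟩ => ?_⟩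
  rw [blockShift_pow_mulVec_single, dif_neg (by omega), zero_mulVec]

theorem neg_complexStructure_mulVec_single (p : Fin r) :
    -complexStructure r *ᵥ Pi.single (p, 0) 1 = Pi.single (p, 1) 1 := by
  ext ⟨a, b⟩
  fin_cases b <;> simp [complexStructure, Zmat, one_apply, Pi.single_apply]

theorem cyclicFamily_mulVec (hr : 0 < r) (x : Fin r × Fin 2) :
    cyclicFamily r x *ᵥ Pi.single (⟨0, hr⟩, 0) 1 = Pi.single x 1 := by
  obtain ⟨⟨k, hk⟩, j⟩ := x
  have hj : (-complexStructure r) ^ (j : ℕ) *ᵥ Pi.single (⟨0, hr⟩, 0) 1 =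
      Pi.single (⟨0, hr⟩, j) 1 := by
    fin_cases j
    · exact (congrArg (· *ᵥ _) (pow_zero _)).trans (one_mulVec _)
    · simpa using neg_complexStructure_mulVec_single r ⟨0, hr⟩
  rw [cyclicFamily, ← mulVec_mulVec, hj, blockShift_pow_mulVec_single]
  simp [hk]

theorem flipForm_transpose : (flipForm r)ᵀ = flipForm r := by
  rw [flipForm, ← kroneckerMap_transpose, transpose_permMatrix, Equiv.Perm.inv_def,
    Fin.revPerm_symm]
  congr 1
  ext i j; fin_cases i <;> fin_cases j <;> rfl

theorem flipForm_mul_self : flipForm r * flipForm r = 1 := by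
  rw [flipForm, ← mul_kronecker_mul, PEquiv.toMatrix_toPEquiv_mul, ← one_kronecker_one]
  congr 1
  · ext p q; simp [one_apply, PEquiv.toMatrix_apply]
  · ext i j; fin_cases i <;> fin_cases j <;> simp [mul_apply, Fin.sum_univ_two, one_apply]

theorem isSelfAdjoint_complexStructure : (flipForm r).IsSelfAdjoint (complexStructure r) := by
  rw [Matrix.IsSelfAdjoint, Matrix.IsAdjointPair, flipForm, complexStructure,
    ← kroneckerMap_transpose, ← mul_kronecker_mul, ← mul_kronecker_mul, transpose_one, one_mul, mul_one]
  congr 1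
  ext i j; fin_cases i <;> fin_cases j <;> simp [Zmat, mul_apply, Fin.sum_univ_two]

theorem isSelfAdjoint_blockShift : (flipForm r).IsSelfAdjoint (blockShift r) := by
  rw [Matrix.IsSelfAdjoint, Matrix.IsAdjointPair, flipForm, blockShift, ← kroneckerMap_transpose,
    ← mul_kronecker_mul, ← mul_kronecker_mul, transpose_one, one_mul, mul_one,
    PEquiv.mul_toMatrix_toPEquiv, PEquiv.toMatrix_toPEquiv_mul, Fin.revPerm_symm]
  congr 1
  ext p q
  simp only [submatrix_apply, transpose_apply, shiftMatrix, of_apply, id, Fin.revPerm_apply,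
    Fin.val_rev]
  congr 1
  apply propext
  omega

theorem pairwise_commute_complexStructure_blockShift :
    ∀ a ∈ ({complexStructure r, blockShift r} : Set _),
      ∀ b ∈ ({complexStructure r, blockShift r} : Set _), Commute a b := by
  have h := commute_complexStructure_blockShift r
  simp only [Set.mem_insert_iff, Set.mem_singleton_iff]
  rintro a (rfl | rfl) b (rfl | rfl) <;> first | exact Commute.refl _ | exact h | exact h.symm

theorem cyclicFamily_mem_adjoin (x : Fin r × Fin 2) :
    cyclicFamily r x ∈ Algebra.adjoin ℝ {complexStructure r, blockShift r} :=
  mul_mem (pow_mem (Algebra.subset_adjoin (by simp)) _)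
    (pow_mem (neg_mem (Algebra.subset_adjoin (by simp))) _)

theorem adjoin_le_centralizer_Amat :
    Algebra.adjoin ℝ {complexStructure r, blockShift r} ≤
      Subalgebra.centralizer ℝ {Amat Complex.I r} := by
  refine Algebra.adjoin_le fun B hB => ?_
  rw [SetLike.mem_coe, Subalgebra.mem_centralizer_singleton_iff, Amat_I_eq_add]
  have h := pairwise_commute_complexStructure_blockShift r
  exact ((h _ (by simp) B hB).add_left (h _ (by simp) B hB)).eq

theorem commute_of_mem_centralizer_Amat {M B : Matrix (Fin r × Fin 2) (Fin r × Fin 2) ℝ}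
    (hM : M ∈ Subalgebra.centralizer ℝ {Amat Complex.I r})
    (hB : B ∈ Algebra.adjoin ℝ {complexStructure r, blockShift r}) : Commute M B := by
  rw [Subalgebra.mem_centralizer_singleton_iff, Amat_I_eq_add] at hM
  have hA : Commute M (complexStructure r + blockShift r) := hM.symm
  have hJ : Commute M (complexStructure r) :=
    Commute.of_commute_add_of_mul_self_eq_neg_one (K := ℝ) (complexStructure_mul_self r)
      (commute_complexStructure_blockShift r) (isNilpotent_blockShift r) hA
  have hN : Commute M (blockShift r) := by simpa using hA.sub_right hJ
  refine Algebra.commute_of_mem_adjoin_of_forall_mem_commute hB ?_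
  simp [hJ, hN]

theorem centralizer_Amat_eq_span (hr : 0 < r) :
    Subalgebra.toSubmodule (Subalgebra.centralizer ℝ {Amat Complex.I r}) =
      Submodule.span ℝ (Set.range (cyclicFamily r)) := by
  refine le_antisymm (fun M hM => ?_) (Submodule.span_le.2 ?_)
  · have hG := cyclicFamily_mem_adjoin r
    rw [eq_sum_smul_of_commute (cyclicFamily_mulVec r hr)
      (fun x y => Algebra.commute_of_mem_adjoin_of_pairwise_commute
        (pairwise_commute_complexStructure_blockShift r) (hG x) (hG y))
      (fun x => commute_of_mem_centralizer_Amat r hM (hG x))]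
    exact Submodule.sum_mem _ fun x _ => Submodule.smul_mem _ _ (Submodule.subset_span ⟨x, rfl⟩)
  · rintro _ ⟨x, rfl⟩
    exact adjoin_le_centralizer_Amat r (cyclicFamily_mem_adjoin r x)

theorem finrank_centralizer_Amat (hr : 0 < r) :
    Module.finrank ℝ (Subalgebra.centralizer ℝ {Amat Complex.I r}) = 2 * r := by
  rw [← Subalgebra.finrank_toSubmodule, centralizer_Amat_eq_span r hr,
    finrank_span_eq_card (linearIndependent_of_mulVec_eq_single (cyclicFamily_mulVec r hr))]
  simp [mul_comm]

theorem isSelfAdjoint_of_mem_centralizer_Amat (hr : 0 < r) :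
    ∀ L ∈ Subalgebra.centralizer ℝ {Amat Complex.I r}, (flipForm r).IsSelfAdjoint L := by
  intro L hL
  rw [← mem_selfAdjointMatricesSubmodule]
  refine Submodule.span_le.2 ?_ ((centralizer_Amat_eq_span r hr).le hL)
  rintro _ ⟨x, rfl⟩
  rw [SetLike.mem_coe, mem_selfAdjointMatricesSubmodule]
  refine IsSelfAdjoint.of_mem_adjoin (pairwise_commute_complexStructure_blockShift r) ?_
    (cyclicFamily_mem_adjoin r x)
  simp only [Set.mem_insert_iff, Set.mem_singleton_iff]
  rintro a (rfl | rfl)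
  exacts [isSelfAdjoint_complexStructure r, isSelfAdjoint_blockShift r]

end FatAlgebra

/-- For the fat algebra `n_{(i,r)}`, the Lie algebra
`g₀ = {X : T₁X + XᵀT₁ = 0, T₂X + XᵀT₂ = 0}` has real dimension `6r`. -/
theorem stmt18 (r : ℕ) (hr : 0 < r)
    (W : Submodule ℝ (Matrix ((Fin r × Fin 2) ⊕ (Fin r × Fin 2))
      ((Fin r × Fin 2) ⊕ (Fin r × Fin 2)) ℝ))
    (hW : (W : Set (Matrix ((Fin r × Fin 2) ⊕ (Fin r × Fin 2))
        ((Fin r × Fin 2) ⊕ (Fin r × Fin 2)) ℝ)) =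
      {X | T1mat r * X + Xᵀ * T1mat r = 0 ∧
           T2mat (Amat Complex.I r) * X + Xᵀ * T2mat (Amat Complex.I r) = 0}) :
    Module.finrank ℝ W = 6 * r := by
  have hW' : W = skewAdjointMatricesSubmodule (T1mat r) ⊓
      skewAdjointMatricesSubmodule (T2mat (Amat Complex.I r)) := by
    ext X
    rw [← SetLike.mem_coe, hW, Submodule.mem_inf, mem_skewAdjointMatricesSubmodule,
      mem_skewAdjointMatricesSubmodule, isSkewAdjoint_iff_mul_add_transpose_mul_eq_zero,
      isSkewAdjoint_iff_mul_add_transpose_mul_eq_zero, Set.mem_ofPred_eq]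
  rw [hW', T1mat, T2mat, finrank_skewAdjoint_fromBlocks_inf (FatAlgebra.flipForm_mul_self r)
    (FatAlgebra.flipForm_transpose r)
    (FatAlgebra.isSelfAdjoint_of_mem_centralizer_Amat r hr),
    FatAlgebra.finrank_centralizer_Amat r hr]
  ring
end

section
/- For the H-type algebra n̂ with T₁ = J₁ = [[0,I_r],[-I_r,0]] and T₂ = J₂ = [[0, iI_r],[iI_r, 0]] (blocks over ℝ⟨1,i⟩ ≅ ℂ embedded as 2×2 real matrices), the Lie algebra g₀(n̂) = {X : J₁X + XᵀJ₁ = 0, J₂X + XᵀJ₂ = 0} is isomorphic as a real Lie algebra to sp(r,ℂ) regarded as a real Lie algebra; in particular its real dimension is r(2r+1)·2. -/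
open Matrix

attribute [local instance] LieRing.ofAssociativeRing

/-- The 2×2 real matrix representing the complex unit `i`. -/
def imat : Matrix (Fin 2) (Fin 2) ℝ := !![0, -1; 1, 0]

/-- `J₁ = [[0, I_r],[-I_r, 0]]` with `r × r` blocks over `ℝ⟨1,i⟩ ≅ ℂ` (realized as
2×2 real matrices), i.e. a `4r × 4r` real matrix. -/
def J1mat (r : ℕ) :
    Matrix ((Fin r × Fin 2) ⊕ (Fin r × Fin 2)) ((Fin r × Fin 2) ⊕ (Fin r × Fin 2)) ℝ :=
  Matrix.fromBlocks 0 1 (-1) 0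

/-- The `2r × 2r` real matrix representing `i·I_r` over `ℝ⟨1,i⟩ ≅ ℂ`. -/
def iIr (r : ℕ) : Matrix (Fin r × Fin 2) (Fin r × Fin 2) ℝ :=
  fun p q => if p.1 = q.1 then imat p.2 q.2 else 0

/-- `J₂ = [[0, iI_r],[iI_r, 0]]` as a `4r × 4r` real matrix. -/
def J2mat (r : ℕ) :
    Matrix ((Fin r × Fin 2) ⊕ (Fin r × Fin 2)) ((Fin r × Fin 2) ⊕ (Fin r × Fin 2)) ℝ :=
  Matrix.fromBlocks 0 (iIr r) (iIr r) 0

/-! From `J₁ X + Xᵀ J₁ = 0` and `J₁² = -1` one gets `Xᵀ = J₁ X J₁`, and then `J₂ X + Xᵀ J₂ = 0`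
says exactly that `X` commutes with `J₁ J₂ = diag(iI_r, -iI_r)`: the elements of `g₀` are linear
for the complex structure on `ℝ^{4r}` that is the standard one on the first summand and the
conjugate one on the second. Realifying a complex `2r × 2r` matrix and then conjugating by
`diag(1, K)`, with `K` the realified complex conjugation, maps `gl(2r, ℂ)` isomorphically onto the
commutant of `J₁ J₂` (`twistedRealify`). It turns `Xᵀ` into `Mᴴ` and `J₁ X J₁` into `J M̄ J`, so
`Xᵀ = J₁ X J₁` becomes `Mᵀ = J M J`, i.e. `M ∈ sp(r, ℂ)`. For the dimension, `M ↦ J M` maps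
`sp(r, ℂ)` onto the symmetric `2r × 2r` matrices, i.e. the functions on unordered pairs of
indices. -/

def AlgHom.conjByInvolution (R : Type*) {A : Type*} [CommSemiring R] [Semiring A] [Algebra R A]
    {p : A} (hp : p * p = 1) : A →ₐ[R] A where
  toFun x := p * x * p
  map_one' := by simp [hp]
  map_mul' x y := by
    simp only [← mul_assoc]
    rw [mul_assoc (p * x) p p, hp, mul_one]
  map_zero' := by simp
  map_add' x y := by simp [mul_add, add_mul]
  commutes' r := by simp [Algebra.algebraMap_eq_smul_one, hp]

theorem AlgHom.conjByInvolution_apply (R : Type*) {A : Type*} [CommSemiring R] [Semiring A]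
    [Algebra R A] {p : A} (hp : p * p = 1) (x : A) : conjByInvolution R hp x = p * x * p :=
  rfl

theorem AlgHom.conjByInvolution_involutive (R : Type*) {A : Type*} [CommSemiring R] [Semiring A]
    [Algebra R A] {p : A} (hp : p * p = 1) : Function.Involutive (conjByInvolution R hp) := by
  intro x
  simp only [conjByInvolution_apply, ← mul_assoc, hp, one_mul]
  rw [mul_assoc, hp, mul_one]

namespace Matrix

section SkewAdjoint

variable {m R : Type*} [Fintype m] [CommRing R] {J J₁ J₂ X : Matrix m m R}

theorem isSkewAdjoint_iff_mul_add_transpose_mul_eq_zero_s19 :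
    J.IsSkewAdjoint X ↔ J * X + Xᵀ * J = 0 := by
  rw [Matrix.IsSkewAdjoint, Matrix.IsAdjointPair, Matrix.mul_neg, add_comm, add_eq_zero_iff_eq_neg]

variable [DecidableEq m]

theorem isSkewAdjoint_iff_transpose_eq (hJ : J * J = -1) : J.IsSkewAdjoint X ↔ Xᵀ = J * X * J := by
  rw [Matrix.IsSkewAdjoint, Matrix.IsAdjointPair]
  constructor
  · intro h
    calc Xᵀ = -(Xᵀ * (J * J)) := by simp [hJ]
      _ = J * X * J := by rw [← Matrix.mul_assoc, h]; simp [Matrix.mul_assoc]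
  · rintro h
    rw [h, Matrix.mul_assoc, hJ]
    simp

theorem isSkewAdjoint_and_isSkewAdjoint_iff (hJ : J₁ * J₁ = -1) :
    J₁.IsSkewAdjoint X ∧ J₂.IsSkewAdjoint X ↔ J₁.IsSkewAdjoint X ∧ Commute (J₁ * J₂) X := by
  rw [isSkewAdjoint_iff_transpose_eq hJ]
  refine and_congr_right fun h1 => ?_
  rw [Matrix.IsSkewAdjoint, Matrix.IsAdjointPair, h1, Commute, SemiconjBy]
  constructor
  · intro h2
    have := congrArg (J₁ * ·) h2
    simp only [← Matrix.mul_assoc, hJ] at this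
    simpa [Matrix.mul_assoc, eq_comm] using this
  · intro h2
    rw [Matrix.mul_assoc (J₁ * X), Matrix.mul_assoc J₁, ← h2]
    simp [← Matrix.mul_assoc, hJ]

end SkewAdjoint

noncomputable section

variable {n : Type*} [Fintype n] [DecidableEq n]

variable (n) in
def realify : Matrix n n ℂ →ₐ[ℝ] Matrix (n × Fin 2) (n × Fin 2) ℝ :=
  (compAlgEquiv n (Fin 2) ℝ ℝ).toAlgHom.comp (Algebra.leftMulMatrix Complex.basisOneI).mapMatrix

theorem realify_eq_compAlgEquiv (M : Matrix n n ℂ) :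
    realify n M = compAlgEquiv n (Fin 2) ℝ ℝ (M.map (Algebra.leftMulMatrix Complex.basisOneI)) :=
  rfl

theorem realify_apply (M : Matrix n n ℂ) (i j : n) (s t : Fin 2) :
    realify n M (i, s) (j, t) = !![(M i j).re, -(M i j).im; (M i j).im, (M i j).re] s t := by
  simp [realify, Algebra.leftMulMatrix_complex]

theorem realify_injective : Function.Injective (realify n) := by
  intro M N h
  ext i j
  have h0 := congrFun (congrFun h (i, 0)) (j, 0)
  have h1 := congrFun (congrFun h (i, 1)) (j, 0)
  simp [realify_apply] at h0 h1
  exact Complex.ext h0 h1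

theorem realify_transpose (M : Matrix n n ℂ) : (realify n M)ᵀ = realify n Mᴴ := by
  ext ⟨i, s⟩ ⟨j, t⟩
  fin_cases s <;> fin_cases t <;> simp [realify_apply]

theorem realify_I_smul_one :
    realify n (Complex.I • 1) = compAlgEquiv n (Fin 2) ℝ ℝ (diagonal fun _ => imat) := by
  rw [realify_eq_compAlgEquiv, smul_one_eq_diagonal, diagonal_map (map_zero _),
    Algebra.leftMulMatrix_complex]
  simp [imat]

theorem realify_I_smul_one_eq_iIr (r : ℕ) : realify (Fin r) (Complex.I • 1) = iIr r := by
  rw [realify_I_smul_one]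
  ext ⟨i, s⟩ ⟨j, t⟩
  by_cases hij : i = j <;> simp [iIr, hij]

theorem eq_of_imat_mul_eq_mul_imat {b : Matrix (Fin 2) (Fin 2) ℝ} (h : imat * b = b * imat) :
    !![b 0 0, -b 1 0; b 1 0, b 0 0] = b := by
  have h00 := congrFun₂ h 0 0
  have h01 := congrFun₂ h 0 1
  simp [imat, mul_apply, Fin.sum_univ_two] at h00 h01
  ext s t
  fin_cases s <;> fin_cases t <;> simp <;> linarith

theorem exists_realify_of_commute {Y : Matrix (n × Fin 2) (n × Fin 2) ℝ}
    (h : Commute (realify n (Complex.I • 1)) Y) : ∃ M, realify n M = Y := by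
  obtain ⟨B, rfl⟩ := (compAlgEquiv n (Fin 2) ℝ ℝ).surjective Y
  rw [realify_I_smul_one, Commute, SemiconjBy, ← map_mul, ← map_mul,
    (compAlgEquiv _ _ _ _).injective.eq_iff] at h
  refine ⟨of fun i j => ⟨B i j 0 0, B i j 1 0⟩, ?_⟩
  rw [realify_eq_compAlgEquiv]
  congr 1
  ext1 i j
  rw [map_apply, of_apply, Algebra.leftMulMatrix_complex]
  exact eq_of_imat_mul_eq_mul_imat (by simpa using congrFun₂ h i j)

theorem map_starRingEnd_map_starRingEnd {m : Type*} (M : Matrix m m ℂ) :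
    (M.map (starRingEnd ℂ)).map (starRingEnd ℂ) = M := by
  ext
  simp

variable (n) in
def conjMat : Matrix (n × Fin 2) (n × Fin 2) ℝ :=
  compAlgEquiv n (Fin 2) ℝ ℝ (diagonal fun _ => !![1, 0; 0, -1])

theorem conjMat_mul_self : conjMat n * conjMat n = 1 := by
  rw [conjMat, ← map_mul, diagonal_mul_diagonal, ← map_one (compAlgEquiv n (Fin 2) ℝ ℝ),
    ← diagonal_one]
  congr
  ext i : 1
  simp [← Matrix.ext_iff, Fin.forall_fin_two, one_apply]

theorem conjMat_transpose : (conjMat n)ᵀ = conjMat n := by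
  ext ⟨i, s⟩ ⟨j, t⟩
  by_cases hij : i = j
  · subst hij; fin_cases s <;> fin_cases t <;> simp [conjMat]
  · simp [conjMat, hij, Ne.symm hij]

theorem conjMat_mul_realify (M : Matrix n n ℂ) :
    conjMat n * realify n M = realify n (M.map (starRingEnd ℂ)) * conjMat n := by
  rw [conjMat, realify_eq_compAlgEquiv, realify_eq_compAlgEquiv, ← map_mul, ← map_mul]
  congr 1
  ext i j s t
  rw [diagonal_mul, mul_diagonal]
  fin_cases s <;> fin_cases t <;> simp [Algebra.leftMulMatrix_complex]

theorem conjMat_mul_realify_mul_conjMat (M : Matrix n n ℂ) :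
    conjMat n * realify n M * conjMat n = realify n (M.map (starRingEnd ℂ)) := by
  rw [conjMat_mul_realify, Matrix.mul_assoc, conjMat_mul_self, Matrix.mul_one]

theorem realify_mul_conjMat (M : Matrix n n ℂ) :
    realify n M * conjMat n = conjMat n * realify n (M.map (starRingEnd ℂ)) := by
  rw [conjMat_mul_realify, map_starRingEnd_map_starRingEnd]

variable (n) in
def realifySum :
    Matrix (n ⊕ n) (n ⊕ n) ℂ →ₐ[ℝ] Matrix (n × Fin 2 ⊕ n × Fin 2) (n × Fin 2 ⊕ n × Fin 2) ℝ :=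
  (reindexAlgEquiv ℝ ℝ (Equiv.sumProdDistrib n n (Fin 2))).toAlgHom.comp (realify (n ⊕ n))

theorem realifySum_fromBlocks (a b c d : Matrix n n ℂ) :
    realifySum n (fromBlocks a b c d) =
      fromBlocks (realify n a) (realify n b) (realify n c) (realify n d) := by
  ext (⟨i, s⟩ | ⟨i, s⟩) (⟨j, t⟩ | ⟨j, t⟩) <;> simp [realifySum, realify_apply]

theorem realifySum_injective : Function.Injective (realifySum n) :=
  (reindexAlgEquiv ℝ ℝ _).injective.comp realify_injective

theorem exists_realifySum_of_commute {Y : Matrix (n × Fin 2 ⊕ n × Fin 2) (n × Fin 2 ⊕ n × Fin 2) ℝ}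
    (h : Commute (realifySum n (Complex.I • 1)) Y) : ∃ M, realifySum n M = Y := by
  let e := reindexAlgEquiv ℝ ℝ (Equiv.sumProdDistrib n n (Fin 2))
  have he : ∀ M, realifySum n M = e (realify (n ⊕ n) M) := fun _ => rfl
  rw [he] at h
  obtain ⟨M, hM⟩ := exists_realify_of_commute (by simpa using h.map e.symm)
  exact ⟨M, by rw [he, hM, e.apply_symm_apply]⟩

variable (n) in
def twist : Matrix (n × Fin 2 ⊕ n × Fin 2) (n × Fin 2 ⊕ n × Fin 2) ℝ :=
  fromBlocks 1 0 0 (conjMat n)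

theorem twist_mul_self : twist n * twist n = 1 := by
  simp [twist, fromBlocks_multiply, conjMat_mul_self]

variable (n) in
def twistedRealify :
    Matrix (n ⊕ n) (n ⊕ n) ℂ →ₐ[ℝ] Matrix (n × Fin 2 ⊕ n × Fin 2) (n × Fin 2 ⊕ n × Fin 2) ℝ :=
  (AlgHom.conjByInvolution ℝ twist_mul_self).comp (realifySum n)

theorem twistedRealify_apply (M : Matrix (n ⊕ n) (n ⊕ n) ℂ) :
    twistedRealify n M = AlgHom.conjByInvolution ℝ twist_mul_self (realifySum n M) :=
  rfl

theorem twistedRealify_fromBlocks (a b c d : Matrix n n ℂ) :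
    twistedRealify n (fromBlocks a b c d) =
      fromBlocks (realify n a) (realify n b * conjMat n) (conjMat n * realify n c)
        (conjMat n * realify n d * conjMat n) := by
  rw [twistedRealify_apply, AlgHom.conjByInvolution_apply, realifySum_fromBlocks, twist,
    fromBlocks_multiply, fromBlocks_multiply]
  simp [Matrix.mul_assoc]

theorem twistedRealify_injective : Function.Injective (twistedRealify n) :=
  (AlgHom.conjByInvolution_involutive ℝ twist_mul_self).injective.comp realifySum_injective

theorem twistedRealify_transpose (M : Matrix (n ⊕ n) (n ⊕ n) ℂ) :
    (twistedRealify n M)ᵀ = twistedRealify n Mᴴ := by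
  rw [← fromBlocks_toBlocks M, fromBlocks_conjTranspose, twistedRealify_fromBlocks,
    twistedRealify_fromBlocks, fromBlocks_transpose]
  simp [transpose_mul, conjMat_transpose, realify_transpose, Matrix.mul_assoc]

theorem exists_twistedRealify_of_commute
    {X : Matrix (n × Fin 2 ⊕ n × Fin 2) (n × Fin 2 ⊕ n × Fin 2) ℝ}
    (h : Commute (twistedRealify n (Complex.I • 1)) X) : ∃ M, twistedRealify n M = X := by
  have hinv := AlgHom.conjByInvolution_involutive ℝ (twist_mul_self (n := n))
  rw [twistedRealify_apply] at h
  have h' := h.map (AlgHom.conjByInvolution ℝ (twist_mul_self (n := n)))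
  rw [hinv] at h'
  obtain ⟨M, hM⟩ := exists_realifySum_of_commute h'
  exact ⟨M, by rw [twistedRealify_apply, hM, hinv]⟩

theorem J1mat_mul_self (r : ℕ) : J1mat r * J1mat r = -1 := by
  simp [J1mat, fromBlocks_multiply, ← fromBlocks_one, fromBlocks_neg]

theorem J1mat_mul_J2mat (r : ℕ) : J1mat r * J2mat r = twistedRealify (Fin r) (Complex.I • 1) := by
  rw [← fromBlocks_one, fromBlocks_smul, smul_zero, twistedRealify_fromBlocks,
    conjMat_mul_realify_mul_conjMat, realify_I_smul_one_eq_iIr]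
  have hconj :
      (Complex.I • 1 : Matrix (Fin r) (Fin r) ℂ).map (starRingEnd ℂ) = -(Complex.I • 1) := by
    ext i j
    by_cases hij : i = j <;> simp [hij]
  rw [hconj, map_neg, realify_I_smul_one_eq_iIr]
  simp [J1mat, J2mat, fromBlocks_multiply]

theorem J1mat_mul_twistedRealify_mul_J1mat (r : ℕ) (M : Matrix (Fin r ⊕ Fin r) (Fin r ⊕ Fin r) ℂ) :
    J1mat r * twistedRealify (Fin r) M * J1mat r =
      twistedRealify (Fin r) (J (Fin r) ℂ * M.map (starRingEnd ℂ) * J (Fin r) ℂ) := by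
  rw [← fromBlocks_toBlocks M]
  simp only [J, J1mat, fromBlocks_map, fromBlocks_multiply, twistedRealify_fromBlocks, zero_mul,
    one_mul, zero_add, mul_zero, mul_neg, mul_one, add_zero, neg_mul, neg_neg, map_neg,
    fromBlocks_inj, neg_inj]
  refine ⟨conjMat_mul_realify_mul_conjMat _, conjMat_mul_realify _, realify_mul_conjMat _, ?_⟩
  rw [conjMat_mul_realify_mul_conjMat, map_starRingEnd_map_starRingEnd]

theorem isSkewAdjoint_J1mat_twistedRealify_iff (r : ℕ)
    (M : Matrix (Fin r ⊕ Fin r) (Fin r ⊕ Fin r) ℂ) :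
    (J1mat r).IsSkewAdjoint (twistedRealify (Fin r) M) ↔
      M ∈ LieAlgebra.Symplectic.sp (Fin r) ℂ := by
  have hconj : J (Fin r) ℂ * M.map (starRingEnd ℂ) * J (Fin r) ℂ =
      (J (Fin r) ℂ * M * J (Fin r) ℂ).map star := by
    simp [Matrix.map_mul]
  rw [isSkewAdjoint_iff_transpose_eq (J1mat_mul_self r), twistedRealify_transpose,
    J1mat_mul_twistedRealify_mul_J1mat, twistedRealify_injective.eq_iff, hconj, conjTranspose,
    (map_injective star_injective).eq_iff, LieAlgebra.Symplectic.sp,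
    mem_skewAdjointMatricesLieSubalgebra, mem_skewAdjointMatricesSubmodule,
    isSkewAdjoint_iff_transpose_eq (J_squared _ _)]

theorem isSkewAdjoint_J1mat_and_J2mat_iff (r : ℕ)
    (X : Matrix (Fin r × Fin 2 ⊕ Fin r × Fin 2) (Fin r × Fin 2 ⊕ Fin r × Fin 2) ℝ) :
    (J1mat r).IsSkewAdjoint X ∧ (J2mat r).IsSkewAdjoint X ↔
      ∃ M ∈ LieAlgebra.Symplectic.sp (Fin r) ℂ, twistedRealify (Fin r) M = X := by
  rw [isSkewAdjoint_and_isSkewAdjoint_iff (J1mat_mul_self r), J1mat_mul_J2mat]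
  constructor
  · rintro ⟨hskew, hcomm⟩
    obtain ⟨M, rfl⟩ := exists_twistedRealify_of_commute hcomm
    exact ⟨M, (isSkewAdjoint_J1mat_twistedRealify_iff r M).1 hskew, rfl⟩
  · rintro ⟨M, hM, rfl⟩
    exact ⟨(isSkewAdjoint_J1mat_twistedRealify_iff r M).2 hM,
      ((Commute.one_left M).smul_left Complex.I).map (twistedRealify (Fin r))⟩

end

end Matrix

namespace LieAlgebra.Symplectic

variable {R : Type*} [CommRing R] {l : Type*} [Fintype l] [DecidableEq l]

theorem mem_sp_iff_isSymm_J_mul {M : Matrix (l ⊕ l) (l ⊕ l) R} :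
    M ∈ sp l R ↔ (J l R * M).IsSymm := by
  rw [sp, mem_skewAdjointMatricesLieSubalgebra, mem_skewAdjointMatricesSubmodule,
    Matrix.IsSkewAdjoint, Matrix.IsAdjointPair, IsSymm, transpose_mul, J_transpose,
    Matrix.mul_neg, Matrix.mul_neg, neg_eq_iff_eq_neg]

variable (R l) in
noncomputable def spEquivSym2 : sp l R ≃ₗ[R] (Sym2 (l ⊕ l) → R) where
  toFun M := Sym2.lift ⟨fun i j => (J l R * M.1) i j, fun i j =>
    (mem_sp_iff_isSymm_J_mul.1 M.2).apply j i⟩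
  invFun f := ⟨-(J l R * of fun i j => f s(i, j)), by
    rw [mem_sp_iff_isSymm_J_mul, Matrix.mul_neg, ← Matrix.mul_assoc, J_squared]
    ext i j
    simp [Sym2.eq_swap]⟩
  map_add' M N := by
    ext s
    induction s using Sym2.ind
    simp [Matrix.mul_add]
  map_smul' c M := by
    ext s
    induction s using Sym2.ind
    simp
  left_inv M := by
    ext : 1
    change -(J l R * (J l R * M.1)) = M.1
    rw [← Matrix.mul_assoc, J_squared, Matrix.neg_mul, Matrix.one_mul, neg_neg]
  right_inv f := by
    ext s
    induction s using Sym2.ind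
    simp [← Matrix.mul_assoc, J_squared]

theorem finrank_sp (K : Type*) [Field K] :
    Module.finrank K (sp l K) = Fintype.card l * (2 * Fintype.card l + 1) := by
  rw [(spEquivSym2 K l).finrank_eq, Module.finrank_fintype_fun_eq_card, Sym2.card,
    Fintype.card_sum, Nat.choose_two_right]
  set c := Fintype.card l
  have h : (c + c + 1) * (c + c + 1 - 1) = c * (2 * c + 1) * 2 := by
    rw [show c + c + 1 - 1 = 2 * c by omega]
    ring
  rw [h, Nat.mul_div_cancel _ two_pos]

end LieAlgebra.Symplectic

namespace LieSubalgebra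

variable (R : Type*) {A L : Type*} [CommRing R] [CommRing A] [Algebra R A] [LieRing L]
  [LieAlgebra R L] [LieAlgebra A L] [IsScalarTower R A L] (K : LieSubalgebra A L)

def restrictScalarsIncl : RestrictScalars R A K →ₗ⁅R⁆ L where
  toFun x := (RestrictScalars.addEquiv R A K x : L)
  map_add' _ _ := rfl
  map_smul' t x := algebraMap_smul A t (RestrictScalars.addEquiv R A K x : L)
  map_lie' := rfl

theorem restrictScalarsIncl_injective : Function.Injective (K.restrictScalarsIncl R) :=
  Subtype.val_injective.comp (RestrictScalars.addEquiv R A K).injective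

theorem range_restrictScalarsIncl : Set.range (K.restrictScalarsIncl R) = K := by
  ext x
  constructor
  · rintro ⟨y, rfl⟩
    exact (RestrictScalars.addEquiv R A K y).2
  · intro hx
    exact ⟨(RestrictScalars.addEquiv R A K).symm ⟨x, hx⟩,
      congrArg Subtype.val ((RestrictScalars.addEquiv R A K).apply_symm_apply ⟨x, hx⟩)⟩

end LieSubalgebra

theorem Module.finrank_restrictScalars (F K E : Type*) [Field F] [Field K] [Algebra F K]
    [AddCommGroup E] [Module K E] :
    Module.finrank F (RestrictScalars F K E) = Module.finrank F K * Module.finrank K E := by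
  let _ : Module K (RestrictScalars F K E) := RestrictScalars.moduleOrig F K E
  have _ : Module.Free K (RestrictScalars F K E) := Module.Free.of_divisionRing K E
  exact (Module.finrank_mul_finrank F K (RestrictScalars F K E)).symm

/-- For the H-type algebra `n̂` with bracket components `J₁`, `J₂`, the Lie
algebra `g₀(n̂) = {X : J₁X + XᵀJ₁ = 0, J₂X + XᵀJ₂ = 0}` is isomorphic, as a real Lie
algebra, to `sp(r,ℂ)` regarded as a real Lie algebra; in particular its real dimension
is `r(2r+1)·2`. -/
theorem stmt19 (r : ℕ)
    (L : LieSubalgebra ℝ (Matrix ((Fin r × Fin 2) ⊕ (Fin r × Fin 2))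
      ((Fin r × Fin 2) ⊕ (Fin r × Fin 2)) ℝ))
    (hL : (L : Set (Matrix ((Fin r × Fin 2) ⊕ (Fin r × Fin 2))
        ((Fin r × Fin 2) ⊕ (Fin r × Fin 2)) ℝ)) =
      {X | J1mat r * X + Xᵀ * J1mat r = 0 ∧ J2mat r * X + Xᵀ * J2mat r = 0}) :
    Nonempty (L ≃ₗ⁅ℝ⁆
        RestrictScalars ℝ ℂ (LieAlgebra.Symplectic.sp (Fin r) ℂ)) ∧
    Module.finrank ℝ L = r * (2 * r + 1) * 2 := by
  set sp := LieAlgebra.Symplectic.sp (Fin r) ℂ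
  let Φ := (twistedRealify (Fin r)).toLieHom.comp (sp.restrictScalarsIncl ℝ)
  have hrange : (Φ.range : Set (Matrix (Fin r × Fin 2 ⊕ Fin r × Fin 2)
      (Fin r × Fin 2 ⊕ Fin r × Fin 2) ℝ)) = L := by
    rw [LieHom.coe_range, LieHom.coe_comp, Set.range_comp,
      LieSubalgebra.range_restrictScalarsIncl, hL]
    ext X
    simp only [Set.mem_image, SetLike.mem_coe, Set.mem_ofPred_eq, AlgHom.coe_toLieHom,
      ← isSkewAdjoint_iff_mul_add_transpose_mul_eq_zero_s19, isSkewAdjoint_J1mat_and_J2mat_iff, sp]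
  let e : RestrictScalars ℝ ℂ sp ≃ₗ⁅ℝ⁆ L := (LieEquiv.ofInjective Φ
    (twistedRealify_injective.comp (sp.restrictScalarsIncl_injective ℝ))).trans
    (LieEquiv.ofEq _ _ hrange)
  refine ⟨⟨e.symm⟩, ?_⟩
  calc Module.finrank ℝ L = Module.finrank ℝ (RestrictScalars ℝ ℂ sp) :=
        e.toLinearEquiv.finrank_eq.symm
    _ = Module.finrank ℝ ℂ * Module.finrank ℂ sp := Module.finrank_restrictScalars ℝ ℂ sp
    _ = r * (2 * r + 1) * 2 := by
      rw [Complex.finrank_real_complex, LieAlgebra.Symplectic.finrank_sp, Fintype.card_fin,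
        mul_comm]
end
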